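/- Let R be a commutative ring and let I_Y ⊆ I_X be ideals of R with I_Y² ∩ I_X³ = I_Y²·I_X. Then the natural maps of R-modules form a short exact sequence 0 → I_Y²/(I_Y²·I_X) → (I_X·I_Y)/(I_X²·I_Y) → (I_X·I_Y)/(I_X²·I_Y + I_Y²) → 0; that is, the map induced by the inclusion I_Y² ⊆ I_X·I_Y (well defined since I_Y²·I_X ⊆ I_X²·I_Y) is injective, the further quotient map is surjective, and the image of the first map equals the kernel of the second. In particular the map I_Y²/(I_Y²·I_X) → (I_X·I_Y)/(I_X²·I_Y) is injective. -/

import Mathlib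

/-- The quotient of an ideal `J` (viewed as an `R`-module) by (its
intersection with) an ideal `K`. -/
abbrev subQuot {R : Type*} [CommRing R] (J K : Ideal R) : Type _ :=
  J ⧸ (Submodule.comap (J : Submodule R R).subtype K)

/-- The natural `R`-linear map `J/K → J'/K'` induced by an inclusion `J ≤ J'`,
well defined when `K ≤ K'`. -/
noncomputable def subQuotMap {R : Type*} [CommRing R] {J J' K K' : Ideal R}
    (hJ : J ≤ J') (hK : K ≤ K') :
    subQuot J K →ₗ[R] subQuot J' K' :=
  Submodule.mapQ _ _ (Submodule.inclusion hJ) (by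
    intro x hx
    simpa using hK hx)

/- Exactness in the middle holds for any ideals: an element `x = a + b` of `IX·IY` with
`a ∈ IX²·IY` and `b ∈ IY²` has the class of `b`. Injectivity amounts to
`IY² ⊓ IX²·IY ≤ IY²·IX`, which follows from the hypothesis because `IX²·IY ≤ IX³`. -/

namespace subQuot

variable {R : Type*} [CommRing R] {J K : Ideal R}

theorem mk_eq_zero_iff (x : J) :
    (Submodule.Quotient.mk x : subQuot J K) = 0 ↔ (x : R) ∈ K := by
  rw [Submodule.Quotient.mk_eq_zero, Submodule.mem_comap, Submodule.subtype_apply]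

theorem mk_surjective :
    Function.Surjective (Submodule.Quotient.mk : J → subQuot J K) :=
  Submodule.Quotient.mk_surjective _

end subQuot

section subQuotMap

variable {R : Type*} [CommRing R] {J J' K K' : Ideal R}

@[simp]
theorem subQuotMap_mk (hJ : J ≤ J') (hK : K ≤ K') (x : J) :
    subQuotMap hJ hK (Submodule.Quotient.mk x) = Submodule.Quotient.mk (Submodule.inclusion hJ x) :=
  rfl

theorem subQuotMap_injective_iff (hJ : J ≤ J') (hK : K ≤ K') :
    Function.Injective (subQuotMap hJ hK) ↔ J ⊓ K' ≤ K := by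
  rw [← LinearMap.ker_eq_bot, eq_bot_iff]
  constructor
  · intro hker x ⟨hxJ, hxK'⟩
    have hx : (Submodule.Quotient.mk ⟨x, hxJ⟩ : subQuot J K) = 0 :=
      (Submodule.mem_bot R).mp <| hker <| by
        rw [LinearMap.mem_ker, subQuotMap_mk, subQuot.mk_eq_zero_iff]
        exact hxK'
    exact (subQuot.mk_eq_zero_iff _).mp hx
  · intro hle z hz
    obtain ⟨x, rfl⟩ := subQuot.mk_surjective z
    rw [LinearMap.mem_ker, subQuotMap_mk, subQuot.mk_eq_zero_iff] at hz
    rw [Submodule.mem_bot, subQuot.mk_eq_zero_iff]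
    exact hle ⟨x.2, hz⟩

theorem subQuotMap_surjective (hK : K ≤ K') : Function.Surjective (subQuotMap (le_refl J) hK) :=
  fun z ↦
    let ⟨x, hx⟩ := subQuot.mk_surjective z
    ⟨Submodule.Quotient.mk x, hx⟩

theorem range_subQuotMap_eq_ker {J₁ K₁ : Ideal R} (hJ : J₁ ≤ J) (hK : K₁ ≤ K) :
    LinearMap.range (subQuotMap hJ hK) =
      LinearMap.ker (subQuotMap (le_refl J) (le_sup_left : K ≤ K ⊔ J₁)) := by
  apply le_antisymm
  · rintro _ ⟨z, rfl⟩
    obtain ⟨y, rfl⟩ := subQuot.mk_surjective z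
    rw [LinearMap.mem_ker, subQuotMap_mk, subQuotMap_mk, subQuot.mk_eq_zero_iff]
    exact Submodule.mem_sup_right y.2
  · intro z hz
    obtain ⟨x, rfl⟩ := subQuot.mk_surjective z
    rw [LinearMap.mem_ker, subQuotMap_mk, subQuot.mk_eq_zero_iff, Submodule.coe_inclusion] at hz
    obtain ⟨a, ha, b, hb, hab⟩ := Submodule.mem_sup.mp hz
    refine ⟨Submodule.Quotient.mk ⟨b, hb⟩, ?_⟩
    have hba : b - x = -a := by rw [← hab]; ring
    rw [subQuotMap_mk, Submodule.Quotient.eq, Submodule.mem_comap, Submodule.subtype_apply,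
      AddSubgroupClass.coe_sub, Submodule.coe_inclusion, hba]
    exact K.neg_mem ha

end subQuotMap

/-- **(Bottom row of the paper's Lemma 6.3, "antisym 2".)**  Let `R` be a
commutative ring and `I_Y ⊆ I_X` ideals with `I_Y² ∩ I_X³ = I_Y²·I_X`.  Then
the natural maps form a short exact sequence
`0 → I_Y²/(I_Y²·I_X) → (I_X·I_Y)/(I_X²·I_Y) → (I_X·I_Y)/(I_X²·I_Y + I_Y²) → 0`:
the map induced by the inclusion `I_Y² ⊆ I_X·I_Y` is injective, the further
quotient map is surjective, and the image of the first equals the kernel of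
the second.  In particular `I_Y²/(I_Y²·I_X) → (I_X·I_Y)/(I_X²·I_Y)` is
injective. -/
theorem ses_of_sq_inclusion
    (R : Type*) [CommRing R] (IX IY : Ideal R) (hYX : IY ≤ IX)
    (h : IY ^ 2 ⊓ IX ^ 3 = IY ^ 2 * IX) :
    Function.Injective
        (subQuotMap (J := IY ^ 2) (J' := IX * IY) (K := IY ^ 2 * IX)
          (K' := IX ^ 2 * IY)
          (by rw [pow_two]; exact Ideal.mul_mono hYX le_rfl)
          (calc IY ^ 2 * IX
              ≤ IX * IY * IX :=
                Ideal.mul_mono (by rw [pow_two]; exact Ideal.mul_mono hYX le_rfl) le_rfl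
            _ = IX ^ 2 * IY := by ring)) ∧
      Function.Surjective
        (subQuotMap (J := IX * IY) (J' := IX * IY) (K := IX ^ 2 * IY)
          (K' := IX ^ 2 * IY ⊔ IY ^ 2) le_rfl le_sup_left) ∧
      LinearMap.range
          (subQuotMap (J := IY ^ 2) (J' := IX * IY) (K := IY ^ 2 * IX)
            (K' := IX ^ 2 * IY)
            (by rw [pow_two]; exact Ideal.mul_mono hYX le_rfl)
            (calc IY ^ 2 * IX
                ≤ IX * IY * IX :=
                  Ideal.mul_mono (by rw [pow_two]; exact Ideal.mul_mono hYX le_rfl) le_rfl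
              _ = IX ^ 2 * IY := by ring)) =
        LinearMap.ker
          (subQuotMap (J := IX * IY) (J' := IX * IY) (K := IX ^ 2 * IY)
            (K' := IX ^ 2 * IY ⊔ IY ^ 2) le_rfl le_sup_left) := by
  have hXXY_le : IX ^ 2 * IY ≤ IX ^ 3 := by
    rw [pow_succ]
    exact Ideal.mul_mono_right hYX
  refine ⟨(subQuotMap_injective_iff _ _).mpr ?_, subQuotMap_surjective _,
    range_subQuotMap_eq_ker _ _⟩
  calc IY ^ 2 ⊓ IX ^ 2 * IY ≤ IY ^ 2 ⊓ IX ^ 3 := inf_le_inf_left _ hXXY_le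
    _ = IY ^ 2 * IX := h
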